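/- Let alpha, beta be real numbers with 0 <= alpha, 0 <= beta, alpha < 1, beta < 1, and alpha + beta <= 1. Define conditional query probabilities p(q | x0, xt) for x0, xt in {A, B} and q in {A, B, AB} by: p(A|A,A) = beta/(1-alpha), p(AB|A,A) = (1-alpha-beta)/(1-alpha); p(B|A,B) = 1; p(A|B,A) = 1; p(B|B,B) = alpha/(1-beta), p(AB|B,B) = (1-alpha-beta)/(1-beta); all unspecified entries equal 0. Then for every q in {A, B, AB}, the quantity Sum over xt in {A,B} of M_{x0,xt} * p(q | x0, xt) does not depend on x0 and equals r(q), where M is the 2x2 matrix with rows (1-alpha, alpha) and (beta, 1-beta), and r(A) = beta, r(B) = alpha, r(AB) = 1 - alpha - beta. -/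
import Mathlib

open Finset

/-- Conditional query probabilities `p(q ∣ x₀, xₜ)` of Table II(a) (case `α + β ≤ 1`).
States: `0 = A`, `1 = B`; queries: `0 = A`, `1 = B`, `2 = AB`. -/
noncomputable def condTableA (α β : ℝ) : Fin 2 → Fin 2 → Fin 3 → ℝ := fun x0 xt q =>
  if x0 = 0 ∧ xt = 0 then
    (if q = 0 then β / (1 - α) else if q = 2 then (1 - α - β) / (1 - α) else 0)
  else if x0 = 0 ∧ xt = 1 then (if q = 1 then 1 else 0)
  else if x0 = 1 ∧ xt = 0 then (if q = 0 then 1 else 0)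
  else (if q = 1 then α / (1 - β) else if q = 2 then (1 - α - β) / (1 - β) else 0)

theorem stmt7 (α β : ℝ) (hα0 : 0 ≤ α) (hα1 : α < 1) (hβ0 : 0 ≤ β) (hβ1 : β < 1)
    (hs : α + β ≤ 1) :
    ∀ (q : Fin 3) (x0 : Fin 2),
      ∑ xt, (!![1 - α, α; β, 1 - β] : Matrix (Fin 2) (Fin 2) ℝ) x0 xt
          * condTableA α β x0 xt q
        = ![β, α, 1 - α - β] q := by
  have ha : (1 - α) ≠ 0 := by linarith
  have hb : (1 - β) ≠ 0 := by linarith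
  intro q x0
  fin_cases q <;> fin_cases x0 <;>
    simp [condTableA, Fin.sum_univ_succ, Matrix.cons_val_zero, Matrix.cons_val_one] <;>
    field_simp <;> ring
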